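/- arXiv:1603.00520 — 2 statements merged into one kernel-verified Lean document; each statement's English description precedes it below -/
import Mathlib

section
/- Let E be a complete real normed vector space, let A : [0,∞) → E be a continuously differentiable curve, and let W : [0,∞) → ℝ be a differentiable function with W(τ) ≥ 0 and W′(τ) = −‖A′(τ)‖² for all τ ≥ 0. Suppose there is a constant κ > 0 such that W(τ) ≤ κ‖A′(τ)‖² for all τ ≥ 0. Then W(τ) ≤ W(0)·e^{−τ/κ} for all τ ≥ 0, and there exists A∞ ∈ E such that A(τ) → A∞ as τ → ∞ and ‖A(τ) − A∞‖ ≤ (√(W(0))/(1 − e^{−1/(2κ)}))·e^{−τ/(2κ)} for all τ ≥ 0. -/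
/-!
Since `W' = -‖A'‖² ≤ -W / κ`, Grönwall's inequality gives `W τ ≤ W 0 · e^{-τ/κ}`.
For the convergence, the two hypotheses combine into
`(√W)' = -‖A'‖² / (2√W) ≤ -‖A'‖ / (2√κ)`, so the length of `A` on `[a, b]` is at most
`2√κ · √(W a)`. With the decay of `W` this is `O(e^{-a/(2κ)})`, so `A` is Cauchy at infinity,
and the stated constant dominates `2√κ` because `(1 - e^{-x})² ≤ x / 2`.
-/

open Real Filter Topology Set

lemma le_mul_sq_div_add_div {c e s u : ℝ} (hc : 0 < c) (he : 0 < e) (hes : e ≤ s) (hu : 0 ≤ u)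
    (h : s ^ 2 ≤ c ^ 2 * u ^ 2 + e ^ 2) : u ≤ c * u ^ 2 / s + e / c := by
  have hs : 0 < s := he.trans_le hes
  have hs_le : s ≤ c * u + e := by nlinarith [mul_nonneg hc.le hu]
  rw [div_add_div _ _ hs.ne' hc.ne', le_div_iff₀ (by positivity)]
  rcases le_or_gt s (c * u) with hcu | hcu
  · nlinarith [mul_le_mul_of_nonneg_left hcu (mul_nonneg hc.le hu)]
  · nlinarith [mul_le_mul_of_nonneg_left hcu.le he.le,
      mul_le_mul_of_nonneg_left hs_le (mul_nonneg hc.le hu)]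

lemma one_sub_exp_neg_sq_le {x : ℝ} (hx : 0 ≤ x) : (1 - exp (-x)) ^ 2 ≤ x / 2 := by
  have hderiv : ∀ y, HasDerivAt (fun y => y / 2 - (1 - exp (-y)) ^ 2)
      (1 / 2 - 2 * (1 - exp (-y)) * exp (-y)) y := fun y => by
    refine (((hasDerivAt_id y).div_const 2).sub
      (((hasDerivAt_neg y).exp.const_sub 1).pow 2)).congr_deriv ?_
    norm_num
  -- `p (1 - p) ≤ 1 / 4` makes the derivative nonnegative
  have hmono := monotone_of_hasDerivAt_nonneg hderiv fun y => by
    simp only [Pi.zero_apply]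
    nlinarith [sq_nonneg (exp (-y) - 1 / 2)]
  simpa using hmono hx

lemma two_mul_sqrt_le_one_div_one_sub_exp {κ : ℝ} (hκ : 0 < κ) :
    2 * √κ ≤ 1 / (1 - exp (-(1 / (2 * κ)))) := by
  have hpos : 0 < 1 - exp (-(1 / (2 * κ))) := by
    linarith [exp_lt_one_iff.2 (neg_lt_zero.2 (by positivity : 0 < 1 / (2 * κ)))]
  rw [le_div_iff₀ hpos, ← pow_le_one_iff_of_nonneg (by positivity) two_ne_zero]
  calc (2 * √κ * (1 - exp (-(1 / (2 * κ))))) ^ 2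
      = 4 * κ * (1 - exp (-(1 / (2 * κ)))) ^ 2 := by rw [mul_pow, mul_pow, sq_sqrt hκ.le]; ring
    _ ≤ 4 * κ * (1 / (2 * κ) / 2) := by gcongr; exact one_sub_exp_neg_sq_le (by positivity)
    _ = 1 := by field_simp; ring

lemma sqrt_mul_exp_neg_div (c τ κ : ℝ) :
    √(c * exp (-(τ / κ))) = √c * exp (-(τ / (2 * κ))) := by
  rw [sqrt_mul' _ (exp_pos _).le, ← exp_half]
  ring_nf

lemma le_mul_exp_neg_of_hasDerivAt_le {W W' : ℝ → ℝ} {κ : ℝ}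
    (hW : ∀ t, 0 ≤ t → HasDerivAt W (W' t) t) (hdecay : ∀ t, 0 ≤ t → W' t ≤ -(W t / κ))
    {τ : ℝ} (hτ : 0 ≤ τ) : W τ ≤ W 0 * exp (-(τ / κ)) := by
  have := le_gronwallBound_of_liminf_deriv_right_le (f := W) (f' := W') (K := -(1 / κ)) (ε := 0)
    (a := 0) (b := τ) (fun t ht => (hW t ht.1).continuousAt.continuousWithinAt)
    (fun t ht _ hr => (hW t ht.1).hasDerivWithinAt.liminf_right_slope_le hr) le_rfl
    (fun t ht => by linarith [hdecay t ht.1, show -(1 / κ) * W t = -(W t / κ) by ring])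
    τ ⟨hτ, le_rfl⟩
  rwa [gronwallBound_ε0, sub_zero, show -(1 / κ) * τ = -(τ / κ) by ring] at this

section LengthEstimate

variable {E : Type*} [NormedAddCommGroup E] [NormedSpace ℝ E]
  {A A' : ℝ → E} {W : ℝ → ℝ} {κ a b : ℝ}

/-- `√W` may fail to be differentiable where `W` vanishes, so it is regularized to `√(W + ε²)`. -/
lemma norm_sub_le_two_mul_sqrt_mul_sqrt_add_sq {ε : ℝ} (hκ : 0 < κ) (hε : 0 < ε) (hab : a ≤ b)
    (hA : ∀ t ∈ Icc a b, HasDerivAt A (A' t) t)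
    (hW : ∀ t ∈ Icc a b, HasDerivAt W (-‖A' t‖ ^ 2) t)
    (hWnonneg : ∀ t ∈ Icc a b, 0 ≤ W t) (hPI : ∀ t ∈ Icc a b, W t ≤ κ * ‖A' t‖ ^ 2) :
    ‖A b - A a‖ ≤ 2 * √κ * √(W a + ε ^ 2) + ε / √κ * (b - a) := by
  set B : ℝ → ℝ := fun t => 2 * √κ * (√(W a + ε ^ 2) - √(W t + ε ^ 2)) + ε / √κ * (t - a)
  have hκ' : 0 < √κ := sqrt_pos.2 hκ
  have hreg : ∀ t ∈ Icc a b, 0 < W t + ε ^ 2 := fun t ht => by positivity [hWnonneg t ht]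
  have hB : ∀ t ∈ Icc a b, HasDerivAt B (√κ * ‖A' t‖ ^ 2 / √(W t + ε ^ 2) + ε / √κ) t := by
    intro t ht
    have hsqrt := ((hW t ht).add_const (ε ^ 2)).sqrt (hreg t ht).ne'
    refine (((hsqrt.const_sub _).const_mul (2 * √κ)).add
      (((hasDerivAt_id t).sub_const a).const_mul _)).congr_deriv ?_
    have : 0 < √(W t + ε ^ 2) := sqrt_pos.2 (hreg t ht)
    field_simp
  have hbound : ∀ t ∈ Icc a b, ‖A' t‖ ≤ √κ * ‖A' t‖ ^ 2 / √(W t + ε ^ 2) + ε / √κ := by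
    intro t ht
    refine le_mul_sq_div_add_div hκ' hε ?_ (norm_nonneg _) ?_
    · calc ε = √(ε ^ 2) := (sqrt_sq hε.le).symm
        _ ≤ √(W t + ε ^ 2) := sqrt_le_sqrt (by linarith [hWnonneg t ht])
    · rw [sq_sqrt (hreg t ht).le, sq_sqrt hκ.le]
      linarith [hPI t ht]
  have hle := image_norm_le_of_norm_deriv_right_le_deriv_boundary' (f := fun t => A t - A a)
    (fun t ht => ((hA t ht).continuousAt.sub continuousAt_const).continuousWithinAt)
    (fun t ht => ((hA t (Ico_subset_Icc_self ht)).sub_const _).hasDerivWithinAt)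
    (by simp [B]) (fun t ht => (hB t ht).continuousAt.continuousWithinAt)
    (fun t ht => (hB t (Ico_subset_Icc_self ht)).hasDerivWithinAt)
    (fun t ht => hbound t (Ico_subset_Icc_self ht)) (right_mem_Icc.2 hab)
  have : 0 ≤ 2 * √κ * √(W b + ε ^ 2) := by positivity
  simp only [B] at hle
  linarith

lemma norm_sub_le_two_mul_sqrt_mul_sqrt (hκ : 0 < κ) (hab : a ≤ b)
    (hA : ∀ t ∈ Icc a b, HasDerivAt A (A' t) t)
    (hW : ∀ t ∈ Icc a b, HasDerivAt W (-‖A' t‖ ^ 2) t)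
    (hWnonneg : ∀ t ∈ Icc a b, 0 ≤ W t) (hPI : ∀ t ∈ Icc a b, W t ≤ κ * ‖A' t‖ ^ 2) :
    ‖A b - A a‖ ≤ 2 * √κ * √(W a) := by
  have hlim : Tendsto (fun ε : ℝ => 2 * √κ * √(W a + ε ^ 2) + ε / √κ * (b - a))
      (𝓝[>] 0) (𝓝 (2 * √κ * √(W a))) := by
    have : Continuous fun ε : ℝ => 2 * √κ * √(W a + ε ^ 2) + ε / √κ * (b - a) := by fun_prop
    simpa using (this.tendsto 0).mono_left nhdsWithin_le_nhds
  exact ge_of_tendsto hlim <| eventually_nhdsWithin_of_forall fun ε hε =>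
    norm_sub_le_two_mul_sqrt_mul_sqrt_add_sq hκ hε hab hA hW hWnonneg hPI

end LengthEstimate

lemma exists_tendsto_dist_le {α : Type*} [PseudoMetricSpace α] [CompleteSpace α]
    {f : ℝ → α} {g : ℝ → ℝ} {a₀ : ℝ} (hf : ∀ a b, a₀ ≤ a → a ≤ b → dist (f a) (f b) ≤ g a)
    (hg : Tendsto g atTop (𝓝 0)) :
    ∃ L, Tendsto f atTop (𝓝 L) ∧ ∀ a, a₀ ≤ a → dist (f a) L ≤ g a := by
  have hcauchy : CauchySeq f := Metric.cauchySeq_iff'.2 fun ε hε => by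
    obtain ⟨N, hgN, hN⟩ := ((hg.eventually (gt_mem_nhds hε)).and (eventually_ge_atTop a₀)).exists
    exact ⟨N, fun n hn => (dist_comm (f n) (f N) ▸ hf N n hN hn).trans_lt hgN⟩
  obtain ⟨L, hL⟩ := cauchySeq_tendsto_of_complete hcauchy
  refine ⟨L, hL, fun a ha => ?_⟩
  exact le_of_tendsto (tendsto_const_nhds.dist hL) <|
    (eventually_ge_atTop a).mono fun b hb => hf a b ha hb

theorem yang_mills_flow_infinite_time_convergence_general
    {E : Type*} [NormedAddCommGroup E] [NormedSpace ℝ E] [CompleteSpace E]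
    (A A' : ℝ → E) (W : ℝ → ℝ) (κ : ℝ) (hκ : 0 < κ)
    (hA : ∀ τ, 0 ≤ τ → HasDerivAt A (A' τ) τ)
    (hW : ∀ τ, 0 ≤ τ → HasDerivAt W (-‖A' τ‖ ^ 2) τ)
    (hWnonneg : ∀ τ, 0 ≤ τ → 0 ≤ W τ)
    (hPI : ∀ τ, 0 ≤ τ → W τ ≤ κ * ‖A' τ‖ ^ 2) :
    (∀ τ, 0 ≤ τ → W τ ≤ W 0 * Real.exp (-(τ / κ))) ∧
    ∃ Alim : E, Tendsto A atTop (nhds Alim) ∧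
      ∀ τ, 0 ≤ τ →
        ‖A τ - Alim‖ ≤ Real.sqrt (W 0) / (1 - Real.exp (-(1 / (2 * κ)))) *
          Real.exp (-(τ / (2 * κ))) := by
  have decay : ∀ τ, 0 ≤ τ → W τ ≤ W 0 * exp (-(τ / κ)) := fun τ hτ =>
    le_mul_exp_neg_of_hasDerivAt_le hW (fun t ht => by
      rw [neg_le_neg_iff, div_le_iff₀ hκ]; linarith [hPI t ht]) hτ
  set C := √(W 0) / (1 - exp (-(1 / (2 * κ))))
  have increment : ∀ a b, 0 ≤ a → a ≤ b → dist (A a) (A b) ≤ C * exp (-(a / (2 * κ))) := by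
    intro a b ha hab
    have hIcc : ∀ t ∈ Icc a b, 0 ≤ t := fun t ht => ha.trans ht.1
    calc dist (A a) (A b) = ‖A b - A a‖ := by rw [dist_comm, dist_eq_norm]
      _ ≤ 2 * √κ * √(W a) := norm_sub_le_two_mul_sqrt_mul_sqrt hκ hab
          (fun t ht => hA t (hIcc t ht)) (fun t ht => hW t (hIcc t ht))
          (fun t ht => hWnonneg t (hIcc t ht)) (fun t ht => hPI t (hIcc t ht))
      _ ≤ 1 / (1 - exp (-(1 / (2 * κ)))) * (√(W 0) * exp (-(a / (2 * κ)))) := by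
          have hconst := two_mul_sqrt_le_one_div_one_sub_exp hκ
          rw [← sqrt_mul_exp_neg_div]
          exact mul_le_mul hconst (sqrt_le_sqrt (decay a ha)) (sqrt_nonneg _)
            ((by positivity : (0 : ℝ) ≤ 2 * √κ).trans hconst)
      _ = C * exp (-(a / (2 * κ))) := by ring
  have hC : Tendsto (fun a => C * exp (-(a / (2 * κ)))) atTop (𝓝 0) := by
    simpa using (tendsto_exp_neg_atTop_nhds_zero.comp
      (tendsto_id.atTop_div_const (by positivity : (0 : ℝ) < 2 * κ))).const_mul C
  obtain ⟨Alim, hlim, hdist⟩ := exists_tendsto_dist_le increment hC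
  exact ⟨decay, Alim, hlim, fun τ hτ => dist_eq_norm (A τ) Alim ▸ hdist τ hτ⟩

/-- Abstract analytic core of the infinite-time convergence argument for the
Yang–Mills flow: a gradient-type flow `A` whose energy `W` satisfies the energy
identity `W' = -‖A'‖²` and a Poincaré inequality `W ≤ κ‖A'‖²` decays
exponentially and converges at infinite time with an explicit exponential rate. -/
theorem yang_mills_flow_infinite_time_convergence
    {E : Type*} [NormedAddCommGroup E] [NormedSpace ℝ E] [CompleteSpace E]
    (A A' : ℝ → E) (W : ℝ → ℝ) (κ : ℝ) (hκ : 0 < κ)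
    (hA : ∀ τ, 0 ≤ τ → HasDerivAt A (A' τ) τ)
    (hA'cont : ContinuousOn A' (Set.Ici (0 : ℝ)))
    (hW : ∀ τ, 0 ≤ τ → HasDerivAt W (-‖A' τ‖ ^ 2) τ)
    (hWnonneg : ∀ τ, 0 ≤ τ → 0 ≤ W τ)
    (hPI : ∀ τ, 0 ≤ τ → W τ ≤ κ * ‖A' τ‖ ^ 2) :
    (∀ τ, 0 ≤ τ → W τ ≤ W 0 * Real.exp (-(τ / κ))) ∧
    ∃ Alim : E, Tendsto A atTop (nhds Alim) ∧
      ∀ τ, 0 ≤ τ →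
        ‖A τ - Alim‖ ≤ Real.sqrt (W 0) / (1 - Real.exp (-(1 / (2 * κ)))) *
          Real.exp (-(τ / (2 * κ))) :=
  yang_mills_flow_infinite_time_convergence_general A A' W κ hκ hA hW hWnonneg hPI
end

section
/- Let E be a complete real normed vector space, let T > 0 be finite, let A : [0,T) → E be a continuously differentiable curve, and let W : [0,T) → ℝ be a differentiable function with W(τ) ≥ 0 and W′(τ) = −‖A′(τ)‖² for all τ ∈ [0,T). Then ‖A(τ_b) − A(τₐ)‖² ≤ (τ_b − τₐ)·W(0) for all 0 ≤ τₐ ≤ τ_b < T, and the limit lim_{τ → T⁻} A(τ) exists in E. -/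
/-!
Fix `λ > 0`. Since `2‖A'‖ ≤ λ‖A'‖² + 1/λ = (-λ W + τ/λ)'`, the fencing theorem for the norm of a
curve gives `2‖A(τ_b) - A(τ_a)‖ ≤ λ (W(τ_a) - W(τ_b)) + (τ_b - τ_a)/λ`, and optimising in `λ`
yields `‖A(τ_b) - A(τ_a)‖² ≤ (τ_b - τ_a)(W(τ_a) - W(τ_b)) ≤ (τ_b - τ_a) W(0)`. This Hölder-`1/2`
estimate makes `A` uniformly continuous on `[0, T)`, so `A` is Cauchy as `τ → T⁻` and converges
by completeness.
-/

open Filter Set Topology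

lemma antitoneOn_of_hasDerivAt_nonpos {s : Set ℝ} (hs : Convex ℝ s) {W W' : ℝ → ℝ}
    (hW : ∀ x ∈ s, HasDerivAt W (W' x) x) (hW' : ∀ x ∈ s, W' x ≤ 0) : AntitoneOn W s :=
  antitoneOn_of_hasDerivWithinAt_nonpos hs
    (fun x hx => (hW x hx).continuousAt.continuousWithinAt)
    (fun x hx => (hW x (interior_subset hx)).hasDerivWithinAt)
    (fun x hx => hW' x (interior_subset hx))

lemma sq_le_mul_of_forall_two_mul_le {x c D : ℝ} (hx : 0 ≤ x) (hc : 0 < c) (hD : 0 ≤ D)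
    (h : ∀ l > 0, 2 * x ≤ l * D + c / l) : x ^ 2 ≤ c * D := by
  rcases hx.eq_or_lt with rfl | hx
  · simpa using mul_nonneg hc.le hD
  have key : 2 * x ≤ c / x * D + x := by
    simpa [div_div_cancel₀ hc.ne'] using h (c / x) (div_pos hc hx)
  have : x ≤ c * D / x := by
    rw [div_mul_eq_mul_div] at key
    linarith
  rw [le_div_iff₀ hx] at this
  nlinarith

lemma two_mul_le_mul_sq_add_one_div {l : ℝ} (hl : 0 < l) (y : ℝ) : 2 * y ≤ l * y ^ 2 + 1 / l := by
  have hsq : 0 ≤ (l * y - 1) ^ 2 / l := by positivity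
  have hexpand : (l * y - 1) ^ 2 / l = l * y ^ 2 + 1 / l - 2 * y := by
    field_simp
    ring
  linarith

section EnergyEstimate

variable {E : Type*} [NormedAddCommGroup E] [NormedSpace ℝ E] {f f' : ℝ → E} {W : ℝ → ℝ}
  {a b : ℝ}

lemma two_mul_norm_sub_le_of_hasDerivAt_energy (hab : a ≤ b)
    (hf : ∀ x ∈ Icc a b, HasDerivAt f (f' x) x)
    (hW : ∀ x ∈ Icc a b, HasDerivAt W (-‖f' x‖ ^ 2) x) {l : ℝ} (hl : 0 < l) :
    2 * ‖f b - f a‖ ≤ l * (W a - W b) + (b - a) / l := by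
  let B : ℝ → ℝ := fun x => (l * (W a - W x) + (x - a) / l) / 2
  have hB : ∀ x ∈ Icc a b, HasDerivAt B ((l * ‖f' x‖ ^ 2 + 1 / l) / 2) x := fun x hx => by
    simpa using ((((hW x hx).const_sub (W a)).const_mul l).add
      (((hasDerivAt_id x).sub_const a).div_const l)).div_const 2
  have fence := image_norm_le_of_norm_deriv_right_le_deriv_boundary' (f := fun x => f x - f a)
    (fun x hx => ((hf x hx).sub_const (f a)).continuousAt.continuousWithinAt)
    (fun x hx => ((hf x (Ico_subset_Icc_self hx)).sub_const (f a)).hasDerivWithinAt)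
    (by simp [B]) (fun x hx => (hB x hx).continuousAt.continuousWithinAt)
    (fun x hx => (hB x (Ico_subset_Icc_self hx)).hasDerivWithinAt)
    (fun x _ => by linarith [two_mul_le_mul_sq_add_one_div hl ‖f' x‖]) ⟨hab, le_rfl⟩
  simp only [B] at fence
  linarith

theorem norm_sub_sq_le_of_hasDerivAt_energy (hab : a ≤ b)
    (hf : ∀ x ∈ Icc a b, HasDerivAt f (f' x) x)
    (hW : ∀ x ∈ Icc a b, HasDerivAt W (-‖f' x‖ ^ 2) x) :
    ‖f b - f a‖ ^ 2 ≤ (b - a) * (W a - W b) := by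
  rcases hab.eq_or_lt with rfl | hab'
  · simp
  have hWab : W b ≤ W a :=
    antitoneOn_of_hasDerivAt_nonpos (convex_Icc a b) hW (fun _ _ => neg_nonpos.2 (sq_nonneg _))
      ⟨le_rfl, hab⟩ ⟨hab, le_rfl⟩ hab
  exact sq_le_mul_of_forall_two_mul_le (norm_nonneg _) (sub_pos.2 hab') (sub_nonneg.2 hWab)
    fun l hl => two_mul_norm_sub_le_of_hasDerivAt_energy hab hf hW hl

end EnergyEstimate

lemma uniformContinuousOn_of_norm_sub_sq_le {E : Type*} [SeminormedAddCommGroup E] {f : ℝ → E}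
    {s : Set ℝ} {C : ℝ} (hf : ∀ u ∈ s, ∀ v ∈ s, u ≤ v → ‖f v - f u‖ ^ 2 ≤ (v - u) * C) :
    UniformContinuousOn f s := by
  refine Metric.uniformContinuousOn_iff.2 fun ε hε => ⟨ε ^ 2 / (|C| + 1), by positivity, ?_⟩
  intro u hu v hv huv
  wlog h : u ≤ v generalizing u v
  · rw [dist_comm] at huv ⊢
    exact this v hv u hu huv (le_of_not_ge h)
  rw [Real.dist_eq, abs_sub_comm, abs_of_nonneg (sub_nonneg.2 h)] at huv
  have hlt : (v - u) * C < ε ^ 2 :=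
    calc (v - u) * C ≤ (v - u) * |C| := by gcongr; exact le_abs_self C
      _ ≤ ε ^ 2 / (|C| + 1) * |C| := by gcongr
      _ < ε ^ 2 := by
        rw [div_mul_eq_mul_div, div_lt_iff₀ (by positivity)]
        nlinarith [pow_pos hε 2]
  rw [dist_comm, dist_eq_norm]
  exact lt_of_pow_lt_pow_left₀ 2 hε.le ((hf u hu v hv h).trans_lt hlt)

lemma exists_tendsto_nhdsLT_of_uniformContinuousOn {α : Type*} [UniformSpace α] [CompleteSpace α]
    {f : ℝ → α} {a b : ℝ} (hab : a < b) (hf : UniformContinuousOn f (Ico a b)) :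
    ∃ L, Tendsto f (𝓝[<] b) (𝓝 L) :=
  cauchy_map_iff_exists_tendsto.1 <|
    (cauchy_nhds.mono nhdsWithin_le_nhds).map_of_le hf (le_principal_iff.2 (Ico_mem_nhdsLT hab))

theorem gradient_flow_finite_time_limit_general
    {E : Type*} [NormedAddCommGroup E] [NormedSpace ℝ E] [CompleteSpace E]
    (T : ℝ) (hT : 0 < T) (A A' : ℝ → E) (W : ℝ → ℝ)
    (hA : ∀ τ, 0 ≤ τ → τ < T → HasDerivAt A (A' τ) τ)
    (hW : ∀ τ, 0 ≤ τ → τ < T → HasDerivAt W (-‖A' τ‖ ^ 2) τ)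
    (hWnonneg : ∀ τ, 0 ≤ τ → τ < T → 0 ≤ W τ) :
    (∀ τa τb : ℝ, 0 ≤ τa → τa ≤ τb → τb < T →
      ‖A τb - A τa‖ ^ 2 ≤ (τb - τa) * W 0) ∧
    ∃ L : E, Tendsto A (nhdsWithin T (Set.Iio T)) (nhds L) := by
  have hWanti : AntitoneOn W (Ico 0 T) :=
    antitoneOn_of_hasDerivAt_nonpos (convex_Ico 0 T) (fun τ hτ => hW τ hτ.1 hτ.2)
      (fun _ _ => neg_nonpos.2 (sq_nonneg _))
  have estimate : ∀ τa τb : ℝ, 0 ≤ τa → τa ≤ τb → τb < T →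
      ‖A τb - A τa‖ ^ 2 ≤ (τb - τa) * W 0 := by
    intro τa τb h0 hab hbT
    have hsub : Icc τa τb ⊆ Ico 0 T := Icc_subset_Ico h0 hbT
    have hWa : W τa ≤ W 0 := hWanti ⟨le_rfl, hT⟩ ⟨h0, hab.trans_lt hbT⟩ h0
    have hWb : 0 ≤ W τb := hWnonneg τb (h0.trans hab) hbT
    calc ‖A τb - A τa‖ ^ 2 ≤ (τb - τa) * (W τa - W τb) :=
          norm_sub_sq_le_of_hasDerivAt_energy hab (fun τ hτ => hA τ (hsub hτ).1 (hsub hτ).2)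
            (fun τ hτ => hW τ (hsub hτ).1 (hsub hτ).2)
      _ ≤ (τb - τa) * W 0 := mul_le_mul_of_nonneg_left (by linarith) (sub_nonneg.2 hab)
  exact ⟨estimate, exists_tendsto_nhdsLT_of_uniformContinuousOn hT
    (uniformContinuousOn_of_norm_sub_sq_le fun u hu v hv huv => estimate u v hu.1 huv hv.2)⟩

/-- Convergence at a finite-time singularity: if the gradient-type flow `A`,
defined on a finite time interval `[0, T)` with nonnegative energy `W` satisfying
the energy identity `W' = -‖A'‖²`, then the displacement satisfies
`‖A(τ_b) - A(τ_a)‖² ≤ (τ_b - τ_a)·W(0)` and the flow converges as `τ → T⁻`. -/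
theorem gradient_flow_finite_time_limit
    {E : Type*} [NormedAddCommGroup E] [NormedSpace ℝ E] [CompleteSpace E]
    (T : ℝ) (hT : 0 < T) (A A' : ℝ → E) (W : ℝ → ℝ)
    (hA : ∀ τ, 0 ≤ τ → τ < T → HasDerivAt A (A' τ) τ)
    (hA'cont : ContinuousOn A' (Set.Ico (0 : ℝ) T))
    (hW : ∀ τ, 0 ≤ τ → τ < T → HasDerivAt W (-‖A' τ‖ ^ 2) τ)
    (hWnonneg : ∀ τ, 0 ≤ τ → τ < T → 0 ≤ W τ) :
    (∀ τa τb : ℝ, 0 ≤ τa → τa ≤ τb → τb < T →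
      ‖A τb - A τa‖ ^ 2 ≤ (τb - τa) * W 0) ∧
    ∃ L : E, Tendsto A (nhdsWithin T (Set.Iio T)) (nhds L) :=
  gradient_flow_finite_time_limit_general T hT A A' W hA hW hWnonneg
end
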